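/- arXiv:2402.03788 — 4 statements merged into one kernel-verified Lean document; each statement's English description precedes it below -/
import Mathlib

section
/- Let c2, c3, c4, c5, c0 be real constants and define u : ℝ² → ℝ by u(t,x) = (c2·t)/2 + (x + Real.log t + c0)/t for t > 0. Then for all t > 0 and all x, u satisfies the PDE ∂u/∂t + u·(∂u/∂x) + c3·(∂²u/∂x²) − (∂u/∂x)² + c4·(∂³u/∂x³) + c5·(∂⁴u/∂x⁴) − c2 = 0. -/
/-!
The solution is affine in `x` with slope `1 / t`, so all spatial derivatives of order at least two
vanish and the equation reduces to `u_t + u / t - 1 / t ^ 2 = c2`, which a direct computation of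
`u_t` confirms.
-/

open Topology

theorem iteratedDeriv_add_two_eq_zero_of_deriv_eq_const {𝕜 F : Type*}
    [NontriviallyNormedField 𝕜] [NormedAddCommGroup F] [NormedSpace 𝕜 F] {f : 𝕜 → F} {c : F} (hf : deriv f = fun _ => c)
    (n : ℕ) : iteratedDeriv (n + 2) f = 0 := by
  funext x
  rw [iteratedDeriv_succ', iteratedDeriv_succ', hf]
  simp

noncomputable def ksProfile (c2 c0 t x : ℝ) : ℝ := c2 * t / 2 + (x + Real.log t + c0) / t

theorem hasDerivAt_ksProfile_space (c2 c0 t x : ℝ) :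
    HasDerivAt (ksProfile c2 c0 t) t⁻¹ x := by
  unfold ksProfile
  simpa using
    ((((hasDerivAt_id x).add_const (Real.log t)).add_const c0).div_const t).const_add (c2 * t / 2)

theorem deriv_ksProfile_space (c2 c0 t : ℝ) : deriv (ksProfile c2 c0 t) = fun _ => t⁻¹ :=
  funext fun x => (hasDerivAt_ksProfile_space c2 c0 t x).deriv

theorem hasDerivAt_ksProfile_time (c2 c0 x : ℝ) {t : ℝ} (ht : t ≠ 0) :
    HasDerivAt (fun s => ksProfile c2 c0 s x) (c2 / 2 + (1 - (x + Real.log t + c0)) / t ^ 2) t := by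
  have hlin : HasDerivAt (fun s : ℝ => c2 * s / 2) (c2 / 2) t := by
    simpa using ((hasDerivAt_id t).const_mul c2).div_const 2
  have hnum : HasDerivAt (fun s : ℝ => x + Real.log s + c0) t⁻¹ t :=
    ((Real.hasDerivAt_log ht).const_add x).add_const c0
  refine (hlin.add (hnum.div (hasDerivAt_id' t) ht)).congr_deriv ?_
  field_simp

theorem stmt_0 (c2 c3 c4 c5 c0 : ℝ) (u : ℝ → ℝ → ℝ)
    (hu : ∀ t x : ℝ, 0 < t → u t x = c2 * t / 2 + (x + Real.log t + c0) / t) :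
    ∀ t x : ℝ, 0 < t →
      deriv (fun s => u s x) t
        + u t x * deriv (fun y => u t y) x
        + c3 * iteratedDeriv 2 (fun y => u t y) x
        - (deriv (fun y => u t y) x) ^ 2
        + c4 * iteratedDeriv 3 (fun y => u t y) x
        + c5 * iteratedDeriv 4 (fun y => u t y) x
        - c2 = 0 := by
  intro t x ht
  have hspace : (fun y => u t y) = ksProfile c2 c0 t := funext fun y => hu t y ht
  have htime : (fun s => u s x) =ᶠ[𝓝 t] fun s => ksProfile c2 c0 s x := by
    filter_upwards [eventually_gt_nhds ht] with s hs using hu s x hs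
  have hflat := iteratedDeriv_add_two_eq_zero_of_deriv_eq_const (deriv_ksProfile_space c2 c0 t)
  rw [htime.deriv_eq, (hasDerivAt_ksProfile_time c2 c0 x ht.ne').deriv, hspace,
    (hasDerivAt_ksProfile_space c2 c0 t x).deriv, hflat 0, hflat 1, hflat 2, Pi.zero_apply,
    hu t x ht]
  field_simp
  ring
end

section
/- Let f, g, α, β, γ, φ : ℝ → ℝ be smooth, let ε₁,...,ε₁₀ be real constants, and let u : ℝ² → ℝ be smooth and satisfy u_t + f'(u)·u_x + α(u)·u_xx + φ''(u)·u_x² + φ'(u)·u_xx + β(u)·u_xxx + γ(u)·u_xxxx = g(u). Define new coordinates t̃ = (t + ε₁)·e^{ε₄}, x̃ = (x + ε₇·t + ε₂)·e^{ε₅}, and the function ũ determined by ũ(t̃, x̃) = (u(t,x) + ε₃)·e^{ε₆}, together with transformed coefficient functions f̃(ũ) = (f(u) + ε₇·u + ε₉)·e^{−ε₄+ε₅+ε₆}, g̃(ũ) = g(u)·e^{−ε₄+ε₆}, α̃(ũ) = (α(u) + ε₈)·e^{−ε₄+2ε₅}, β̃(ũ) = β(u)·e^{−ε₄+3ε₅},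 γ̃(ũ) = γ(u)·e^{−ε₄+4ε₅}, φ̃(ũ) = (φ(u) − ε₈·u + ε₁₀)·e^{−ε₄+2ε₅+ε₆}, where u = e^{−ε₆}·ũ − ε₃. Then ũ satisfies ũ_{t̃} + f̃'(ũ)·ũ_{x̃} + α̃(ũ)·ũ_{x̃x̃} + φ̃''(ũ)·ũ_{x̃}² + φ̃'(ũ)·ũ_{x̃x̃} + β̃(ũ)·ũ_{x̃x̃x̃} + γ̃(ũ)·ũ_{x̃x̃x̃x̃} = g̃(ũ). -/
open Real ContDiff

lemma itd_affine (h : ℝ → ℝ) (hh : ContDiff ℝ ∞ h) (c d : ℝ) (n : ℕ) (x : ℝ) :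
    iteratedDeriv n (fun y => h (c * y + d)) x = c ^ n * iteratedDeriv n h (c * x + d) := by
  have hh2 : ContDiff ℝ n (fun z => h (z + d)) :=
    (hh.of_le (by exact_mod_cast le_top)).comp (contDiff_id.add contDiff_const)
  have h1 : (fun y => h (c * y + d)) = fun y => (fun z => h (z + d)) (c * y) := rfl
  rw [h1, iteratedDeriv_comp_const_mul hh2 c, iteratedDeriv_comp_add_const]

lemma itd_const_mul' (p : ℝ → ℝ) (hp : ContDiff ℝ ∞ p) (b : ℝ) :
    ∀ (n : ℕ) (x : ℝ), iteratedDeriv n (fun y => b * p y) x = b * iteratedDeriv n p x := by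
  intro n
  induction n with
  | zero => simp
  | succ m ih =>
    intro x
    rw [iteratedDeriv_succ, funext ih, iteratedDeriv_succ]
    exact deriv_const_mul b ((hp.differentiable_iteratedDeriv m
      (by exact_mod_cast lt_top_iff_ne_top.mpr (by simp))).differentiableAt)

lemma itd_mul_add (p : ℝ → ℝ) (hp : ContDiff ℝ ∞ p) (a b : ℝ) (m : ℕ) (x : ℝ) :
    iteratedDeriv (m + 1) (fun y => (p y + a) * b) x = b * iteratedDeriv (m + 1) p x := by
  rw [iteratedDeriv_succ', iteratedDeriv_succ']
  have hd : deriv (fun y => (p y + a) * b) = fun y => b * deriv p y := by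
    funext y
    rw [show (fun y => (p y + a) * b) = fun y => b * p y + a * b by funext z; ring]
    rw [deriv_add_const, deriv_const_mul b ((hp.differentiable
      (by simp)).differentiableAt)]
  rw [hd]
  have hdp : ContDiff ℝ ∞ (deriv p) := (contDiff_infty_iff_deriv.mp hp).2
  rw [itd_const_mul' (deriv p) hdp b m x]

theorem stmt_10 (f g alpha beta gamma phi : ℝ → ℝ)
    (hf : ContDiff ℝ (⊤ : ℕ∞) f) (hg : ContDiff ℝ (⊤ : ℕ∞) g) (halpha : ContDiff ℝ (⊤ : ℕ∞) alpha)
    (hbeta : ContDiff ℝ (⊤ : ℕ∞) beta) (hgamma : ContDiff ℝ (⊤ : ℕ∞) gamma) (hphi : ContDiff ℝ (⊤ : ℕ∞) phi)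
    (e1 e2 e3 e4 e5 e6 e7 e8 e9 e10 : ℝ)
    (u : ℝ → ℝ → ℝ) (hu : ContDiff ℝ (⊤ : ℕ∞) (fun p : ℝ × ℝ => u p.1 p.2))
    (hpde : ∀ t x : ℝ,
      deriv (fun s => u s x) t
        + deriv f (u t x) * deriv (fun y => u t y) x
        + alpha (u t x) * iteratedDeriv 2 (fun y => u t y) x
        + iteratedDeriv 2 phi (u t x) * (deriv (fun y => u t y) x) ^ 2
        + deriv phi (u t x) * iteratedDeriv 2 (fun y => u t y) x
        + beta (u t x) * iteratedDeriv 3 (fun y => u t y) x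
        + gamma (u t x) * iteratedDeriv 4 (fun y => u t y) x = g (u t x))
    (ut : ℝ → ℝ → ℝ) (hut : ContDiff ℝ (⊤ : ℕ∞) (fun p : ℝ × ℝ => ut p.1 p.2))
    (hrel : ∀ t x : ℝ,
      ut ((t + e1) * Real.exp e4) ((x + e7 * t + e2) * Real.exp e5)
        = (u t x + e3) * Real.exp e6)
    (ft gt alphat betat gammat phit : ℝ → ℝ)
    (hft : ∀ s : ℝ, ft s = (f (Real.exp (-e6) * s - e3) + e7 * (Real.exp (-e6) * s - e3) + e9)
      * Real.exp (-e4 + e5 + e6))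
    (hgt : ∀ s : ℝ, gt s = g (Real.exp (-e6) * s - e3) * Real.exp (-e4 + e6))
    (halphat : ∀ s : ℝ, alphat s = (alpha (Real.exp (-e6) * s - e3) + e8) * Real.exp (-e4 + 2 * e5))
    (hbetat : ∀ s : ℝ, betat s = beta (Real.exp (-e6) * s - e3) * Real.exp (-e4 + 3 * e5))
    (hgammat : ∀ s : ℝ, gammat s = gamma (Real.exp (-e6) * s - e3) * Real.exp (-e4 + 4 * e5))
    (hphit : ∀ s : ℝ, phit s = (phi (Real.exp (-e6) * s - e3) - e8 * (Real.exp (-e6) * s - e3) + e10)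
      * Real.exp (-e4 + 2 * e5 + e6)) :
    ∀ tt xx : ℝ,
      deriv (fun s => ut s xx) tt
        + deriv ft (ut tt xx) * deriv (fun y => ut tt y) xx
        + alphat (ut tt xx) * iteratedDeriv 2 (fun y => ut tt y) xx
        + iteratedDeriv 2 phit (ut tt xx) * (deriv (fun y => ut tt y) xx) ^ 2
        + deriv phit (ut tt xx) * iteratedDeriv 2 (fun y => ut tt y) xx
        + betat (ut tt xx) * iteratedDeriv 3 (fun y => ut tt y) xx
        + gammat (ut tt xx) * iteratedDeriv 4 (fun y => ut tt y) xx = gt (ut tt xx) := by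
  intro tt xx
  -- downgrade smoothness
  have hf' : ContDiff ℝ ∞ f := hf.of_le (by simp)
  have hphi' : ContDiff ℝ ∞ phi := hphi.of_le (by simp)
  have hu' : ContDiff ℝ ∞ (fun p : ℝ × ℝ => u p.1 p.2) := hu.of_le (by simp)
  -- basic exp facts
  have h4 : Real.exp (-e4) * Real.exp e4 = 1 := by rw [← Real.exp_add]; simp
  have h5 : Real.exp (-e5) * Real.exp e5 = 1 := by rw [← Real.exp_add]; simp
  have h6 : Real.exp (-e6) * Real.exp e6 = 1 := by rw [← Real.exp_add]; simp
  set T : ℝ := tt * Real.exp (-e4) - e1 with hT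
  set X : ℝ := xx * Real.exp (-e5) - e7 * T - e2 with hX
  set U : ℝ := u T X with hU
  set v : ℝ → ℝ := fun y => u T y with hv
  have hvC : ContDiff ℝ ∞ v := hu'.comp (contDiff_const.prodMk contDiff_id)
  -- ut along the spatial slice
  have hslice : ∀ y : ℝ, ut tt y
      = (fun z => (u T z + e3) * Real.exp e6) (Real.exp (-e5) * y + (-(e7 * T) - e2)) := by
    intro y
    have h := hrel T (Real.exp (-e5) * y + (-(e7 * T) - e2))
    have h1 : (T + e1) * Real.exp e4 = tt := by
      rw [hT]; linear_combination tt * h4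
    have h2 : (Real.exp (-e5) * y + (-(e7 * T) - e2) + e7 * T + e2) * Real.exp e5 = y := by
      linear_combination y * h5
    rw [h1, h2] at h
    exact h
  -- value of ut at the point
  have hval : ut tt xx = (U + e3) * Real.exp e6 := by
    rw [hslice xx]
    simp only [show Real.exp (-e5) * xx + (-(e7 * T) - e2) = X from by rw [hX]; ring, ← hU]
  -- spatial iterated derivatives
  have hspace : ∀ m : ℕ, iteratedDeriv (m + 1) (fun y => ut tt y) xx
      = Real.exp (-e5) ^ (m + 1) * (Real.exp e6 * iteratedDeriv (m + 1) v X) := by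
    intro m
    have hfun : (fun y => ut tt y)
        = fun y => (fun z => (u T z + e3) * Real.exp e6) (Real.exp (-e5) * y + (-(e7 * T) - e2)) :=
      funext hslice
    have hwC : ContDiff ℝ ∞ (fun z => (u T z + e3) * Real.exp e6) :=
      (hvC.add contDiff_const).mul contDiff_const
    rw [hfun, itd_affine _ hwC _ _ (m + 1) xx]
    have hpt : Real.exp (-e5) * xx + (-(e7 * T) - e2) = X := by rw [hX]; ring
    rw [hpt, itd_mul_add v hvC e3 (Real.exp e6) m X]
  -- time derivative
  have htime : ∀ s : ℝ, ut s xx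
      = (u (s * Real.exp (-e4) - e1)
          (xx * Real.exp (-e5) - e7 * (s * Real.exp (-e4) - e1) - e2) + e3) * Real.exp e6 := by
    intro s
    have h := hrel (s * Real.exp (-e4) - e1)
      (xx * Real.exp (-e5) - e7 * (s * Real.exp (-e4) - e1) - e2)
    have h1 : (s * Real.exp (-e4) - e1 + e1) * Real.exp e4 = s := by
      linear_combination s * h4
    have h2 : (xx * Real.exp (-e5) - e7 * (s * Real.exp (-e4) - e1) - e2
        + e7 * (s * Real.exp (-e4) - e1) + e2) * Real.exp e5 = xx := by
      linear_combination xx * h5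
    rw [h1, h2] at h
    exact h
  set F : ℝ × ℝ → ℝ := fun p => u p.1 p.2 with hF
  set L := fderiv ℝ F (T, X) with hL
  have hFd : HasFDerivAt F L (T, X) :=
    ((hu.differentiable (by simp)) (T, X)).hasFDerivAt
  have hpt : L (1, 0) = deriv (fun s => u s X) T := by
    have h1 : HasDerivAt (fun s : ℝ => (s, X)) ((1 : ℝ), (0 : ℝ)) T :=
      (hasDerivAt_id T).prodMk (hasDerivAt_const T X)
    exact ((hFd.comp_hasDerivAt T h1).deriv).symm
  have hpx : L (0, 1) = deriv v X := by
    have h1 : HasDerivAt (fun y : ℝ => (T, y)) ((0 : ℝ), (1 : ℝ)) X :=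
      (hasDerivAt_const X T).prodMk (hasDerivAt_id X)
    exact ((hFd.comp_hasDerivAt X h1).deriv).symm
  have htd : deriv (fun s => ut s xx) tt
      = (Real.exp (-e4) * deriv (fun s => u s X) T
         - e7 * Real.exp (-e4) * deriv v X) * Real.exp e6 := by
    have hG : HasDerivAt (fun s : ℝ => (s * Real.exp (-e4) - e1,
        xx * Real.exp (-e5) - e7 * (s * Real.exp (-e4) - e1) - e2))
        ((Real.exp (-e4), -(e7 * Real.exp (-e4)))) tt := by
      have h1 : HasDerivAt (fun s : ℝ => s * Real.exp (-e4) - e1) (Real.exp (-e4)) tt := by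
        simpa using ((hasDerivAt_id tt).mul_const (Real.exp (-e4))).sub_const e1
      have h2 : HasDerivAt (fun s : ℝ => xx * Real.exp (-e5)
          - e7 * (s * Real.exp (-e4) - e1) - e2) (-(e7 * Real.exp (-e4))) tt := by
        simpa using ((h1.const_mul e7).const_sub (xx * Real.exp (-e5))).sub_const e2
      exact h1.prodMk h2
    have hcomp : HasDerivAt (fun s : ℝ => F (s * Real.exp (-e4) - e1,
        xx * Real.exp (-e5) - e7 * (s * Real.exp (-e4) - e1) - e2))
        (L ((Real.exp (-e4), -(e7 * Real.exp (-e4))))) tt := by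
      have hptT : ((tt * Real.exp (-e4) - e1,
          xx * Real.exp (-e5) - e7 * (tt * Real.exp (-e4) - e1) - e2) : ℝ × ℝ) = (T, X) := by
        rw [hT, hX]
      exact (show HasFDerivAt F L (tt * Real.exp (-e4) - e1,
          xx * Real.exp (-e5) - e7 * (tt * Real.exp (-e4) - e1) - e2) from hptT ▸ hFd).comp_hasDerivAt tt hG
    have hfull : HasDerivAt (fun s => ut s xx)
        (L ((Real.exp (-e4), -(e7 * Real.exp (-e4)))) * Real.exp e6) tt := by
      have := (hcomp.add_const e3).mul_const (Real.exp e6)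
      simpa [funext htime] using this
    rw [hfull.deriv]
    have hdec : ((Real.exp (-e4), -(e7 * Real.exp (-e4))) : ℝ × ℝ)
        = Real.exp (-e4) • ((1 : ℝ), (0 : ℝ)) + (-(e7 * Real.exp (-e4))) • ((0 : ℝ), (1 : ℝ)) := by
      simp [Prod.ext_iff]
    rw [hdec, map_add, map_smul, map_smul, smul_eq_mul, smul_eq_mul, hpt, hpx]
    ring
  -- value of outer variable
  have hinf : Differentiable ℝ f := hf'.differentiable (by simp)
  have hinphi : Differentiable ℝ phi := hphi'.differentiable (by simp)
  have hs0 : Real.exp (-e6) * ut tt xx - e3 = U := by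
    rw [hval]; linear_combination (U + e3) * h6
  have hs0' : Real.exp (-e6) * ut tt xx + (-e3) = U := by rw [← hs0]; ring
  set C1 := Real.exp (-e4 + e5 + e6) with hC1
  set C2 := Real.exp (-e4 + 2 * e5 + e6) with hC2
  -- derivative of ft
  have hF1C : ContDiff ℝ ∞ (fun z => (f z + e7 * z + e9) * C1) :=
    ((hf'.add (contDiff_const.mul contDiff_id)).add contDiff_const).mul contDiff_const
  have hft_fun : ft = fun s => (fun z => (f z + e7 * z + e9) * C1) (Real.exp (-e6) * s + (-e3)) := by
    funext s; simp only [← sub_eq_add_neg]; exact hft s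
  have hdft : deriv ft (ut tt xx) = Real.exp (-e6) * ((deriv f U + e7) * C1) := by
    rw [← iteratedDeriv_one, hft_fun, itd_affine _ hF1C _ _ 1 (ut tt xx), pow_one,
      iteratedDeriv_one, hs0']
    congr 1
    have h2 : HasDerivAt (fun z : ℝ => e7 * z) e7 U := by
      simpa using (hasDerivAt_id U).const_mul e7
    have hd : HasDerivAt (fun z => (f z + e7 * z + e9) * C1) ((deriv f U + e7) * C1) U :=
      (((hinf U).hasDerivAt.add h2).add_const e9).mul_const C1
    exact hd.deriv
  -- derivatives of phit
  have hPhiC : ContDiff ℝ ∞ (fun z => (phi z - e8 * z + e10) * C2) :=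
    ((hphi'.sub (contDiff_const.mul contDiff_id)).add contDiff_const).mul contDiff_const
  have hphit_fun : phit
      = fun s => (fun z => (phi z - e8 * z + e10) * C2) (Real.exp (-e6) * s + (-e3)) := by
    funext s; simp only [← sub_eq_add_neg]; exact hphit s
  have hdPhi : deriv (fun z => (phi z - e8 * z + e10) * C2) = fun z => (deriv phi z - e8) * C2 := by
    funext z
    have h2 : HasDerivAt (fun z : ℝ => e8 * z) e8 z := by
      simpa using (hasDerivAt_id z).const_mul e8
    exact ((((hinphi z).hasDerivAt.sub h2).add_const e10).mul_const C2).deriv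
  have hdphit : deriv phit (ut tt xx) = Real.exp (-e6) * ((deriv phi U - e8) * C2) := by
    rw [← iteratedDeriv_one, hphit_fun, itd_affine _ hPhiC _ _ 1 (ut tt xx), pow_one,
      iteratedDeriv_one, hs0', hdPhi]
  have hd2phit : iteratedDeriv 2 phit (ut tt xx)
      = Real.exp (-e6) ^ 2 * (iteratedDeriv 2 phi U * C2) := by
    rw [hphit_fun, itd_affine _ hPhiC _ _ 2 (ut tt xx), hs0']
    congr 1
    have h21 : (2 : ℕ) = 1 + 1 := rfl
    rw [h21, iteratedDeriv_succ, iteratedDeriv_one, hdPhi]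
    have hdphiD : DifferentiableAt ℝ (deriv phi) U :=
      ((contDiff_infty_iff_deriv.mp hphi').2.differentiable (by simp)) U
    rw [((hdphiD.hasDerivAt.sub_const e8).mul_const C2).deriv, iteratedDeriv_succ,
      iteratedDeriv_one]
  -- spatial derivative shorthand
  have hs1 : deriv (fun y => ut tt y) xx
      = Real.exp (-e5) ^ 1 * (Real.exp e6 * deriv v X) := by
    rw [← iteratedDeriv_one]
    have := hspace 0
    rw [this, iteratedDeriv_one]
  have hs2 : iteratedDeriv 2 (fun y => ut tt y) xx
      = Real.exp (-e5) ^ 2 * (Real.exp e6 * iteratedDeriv 2 v X) := hspace 1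
  have hs3 : iteratedDeriv 3 (fun y => ut tt y) xx
      = Real.exp (-e5) ^ 3 * (Real.exp e6 * iteratedDeriv 3 v X) := hspace 2
  have hs4 : iteratedDeriv 4 (fun y => ut tt y) xx
      = Real.exp (-e5) ^ 4 * (Real.exp e6 * iteratedDeriv 4 v X) := hspace 3
  -- the original PDE at (T, X)
  have hkey := hpde T X
  rw [← hv, ← hU] at hkey
  have hA : deriv (fun s => u s X) T
      = g U - (deriv f U * deriv v X + alpha U * iteratedDeriv 2 v X
        + iteratedDeriv 2 phi U * (deriv v X) ^ 2 + deriv phi U * iteratedDeriv 2 v X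
        + beta U * iteratedDeriv 3 v X + gamma U * iteratedDeriv 4 v X) := by
    linarith [hkey]
  -- assemble
  rw [htd, hA, hdft, hdphit, hd2phit, hs1, hs2, hs3, hs4,
    halphat (ut tt xx), hbetat (ut tt xx), hgammat (ut tt xx), hgt (ut tt xx), hs0]
  rw [show Real.exp (-e4 + 2 * e5) = Real.exp (-e4 + e5 + e5) from by
      rw [show (-e4 + 2 * e5 : ℝ) = -e4 + e5 + e5 from by ring],
    show Real.exp (-e4 + 3 * e5) = Real.exp (-e4 + e5 + e5 + e5) from by
      rw [show (-e4 + 3 * e5 : ℝ) = -e4 + e5 + e5 + e5 from by ring],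
    show Real.exp (-e4 + 4 * e5) = Real.exp (-e4 + e5 + e5 + e5 + e5) from by
      rw [show (-e4 + 4 * e5 : ℝ) = -e4 + e5 + e5 + e5 + e5 from by ring],
    hC1, hC2,
    show (-e4 + 2 * e5 + e6 : ℝ) = -e4 + e5 + e5 + e6 from by ring]
  simp only [Real.exp_add, Real.exp_neg]
  field_simp
  ring
end

section
/- Let c1,...,c6 be real constants with c6 ≠ 0 and c1² + 6·c2·c6 < 0, and suppose h : ℝ → ℝ is differentiable, never zero, with 2·h(z)·(3·c6·h(z) + c1) − c2 > 0 for all z, and satisfies the implicit relation Real.log(2·h(z)·(3·c6·h(z) + c1) − c2) − 2·Real.log|h(z)| + (2·c1/√(−c1² − 6·c2·c6))·arctan((6·c6·h(z) + c1)/√(−c1² − 6·c2·c6)) = −2·c2·z + c0 for all z, where c0 is a constant. Then h satisfies the Abel equation h'(z) = −6·c6·h(z)³ − 2·c1·h(z)² + c2·h(z) for all z. -/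
/-
The left-hand side of the implicit relation is `F (h z)` for an explicit function `F`, and the
discriminant condition gives `s² + (6 c6 y + c1)² = 6 c6 P(y)` with `s² = -c1² - 6 c2 c6` and
`P(y) = 6 c6 y² + 2 c1 y - c2`, so the arctangent term differentiates to `2 c1 / P(y)` and
`F'(y) = 2 c2 / (y P(y))`. Differentiating `F (h z) = -2 c2 z + c0` then gives
`2 c2 h' = -2 c2 h P(h)`, and `c2 ≠ 0` by the discriminant condition.
-/

open Real

namespace AbelImplicit

variable (c1 c2 c6 : ℝ)

def quadratic (y : ℝ) : ℝ := 2 * y * (3 * c6 * y + c1) - c2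

noncomputable def potential (y : ℝ) : ℝ :=
  log (quadratic c1 c2 c6 y) - 2 * log |y|
    + (2 * c1 / √(-c1 ^ 2 - 6 * c2 * c6)) * arctan ((6 * c6 * y + c1) / √(-c1 ^ 2 - 6 * c2 * c6))

variable {c1 c2 c6}

lemma sq_add_sq_eq_mul_quadratic {s : ℝ} (hs : s ^ 2 = -c1 ^ 2 - 6 * c2 * c6) (y : ℝ) :
    s ^ 2 + (6 * c6 * y + c1) ^ 2 = 6 * c6 * quadratic c1 c2 c6 y := by
  rw [hs, quadratic]; ring

lemma hasDerivAt_potential (hdisc : c1 ^ 2 + 6 * c2 * c6 < 0) {y : ℝ} (hy : y ≠ 0)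
    (hP : quadratic c1 c2 c6 y ≠ 0) :
    HasDerivAt (potential c1 c2 c6) (2 * c2 / (y * quadratic c1 c2 c6 y)) y := by
  set s := √(-c1 ^ 2 - 6 * c2 * c6)
  have hs : s ^ 2 = -c1 ^ 2 - 6 * c2 * c6 := sq_sqrt (by linarith)
  have hs0 : s ≠ 0 := (sqrt_pos.mpr (by linarith)).ne'
  have hc6 : c6 ≠ 0 := by rintro rfl; nlinarith
  have hP' : HasDerivAt (quadratic c1 c2 c6) (12 * c6 * y + 2 * c1) y := by
    refine ((((hasDerivAt_id' y).const_mul 2).mul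
      (((hasDerivAt_id' y).const_mul (3 * c6)).add_const c1)).sub_const c2).congr_deriv ?_
    ring
  have hlogAbs : HasDerivAt (fun y => log |y|) y⁻¹ y := by
    simpa only [log_abs] using hasDerivAt_log hy
  have harctan : HasDerivAt (fun y => arctan ((6 * c6 * y + c1) / s))
      (1 / (1 + ((6 * c6 * y + c1) / s) ^ 2) * (6 * c6 / s)) y := by
    have := (((hasDerivAt_id y).const_mul (6 * c6)).add_const c1).div_const s
    simpa using this.arctan
  refine (((hP'.log hP).sub (hlogAbs.const_mul 2)).add
    (harctan.const_mul (2 * c1 / s))).congr_deriv ?_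
  have hden : s ^ 2 + (6 * c6 * y + c1) ^ 2 = 6 * c6 * quadratic c1 c2 c6 y :=
    sq_add_sq_eq_mul_quadratic hs y
  have harctanTerm : 2 * c1 / s * (1 / (1 + ((6 * c6 * y + c1) / s) ^ 2) * (6 * c6 / s))
      = 2 * c1 / quadratic c1 c2 c6 y := by
    rw [div_pow, one_add_div (pow_ne_zero 2 hs0), hden]
    field_simp
  rw [harctanTerm]
  field_simp
  simp only [quadratic]
  ring

end AbelImplicit

open AbelImplicit in
theorem stmt_13_general (c1 c2 c6 c0 : ℝ)
    (hdisc : c1 ^ 2 + 6 * c2 * c6 < 0)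
    (h : ℝ → ℝ) (hdiff : Differentiable ℝ h) (hne : ∀ z : ℝ, h z ≠ 0)
    (hpos : ∀ z : ℝ, 0 < 2 * h z * (3 * c6 * h z + c1) - c2)
    (himp : ∀ z : ℝ,
      Real.log (2 * h z * (3 * c6 * h z + c1) - c2) - 2 * Real.log |h z|
        + (2 * c1 / Real.sqrt (-c1 ^ 2 - 6 * c2 * c6))
          * Real.arctan ((6 * c6 * h z + c1) / Real.sqrt (-c1 ^ 2 - 6 * c2 * c6))
        = -2 * c2 * z + c0) :
    ∀ z : ℝ, deriv h z = -6 * c6 * (h z) ^ 3 - 2 * c1 * (h z) ^ 2 + c2 * h z := by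
  intro z
  have hc2 : c2 ≠ 0 := by rintro rfl; nlinarith
  have hP : quadratic c1 c2 c6 (h z) ≠ 0 := (hpos z).ne'
  have hchain : HasDerivAt (potential c1 c2 c6 ∘ h)
      (2 * c2 / (h z * quadratic c1 c2 c6 (h z)) * deriv h z) z :=
    (hasDerivAt_potential hdisc (hne z) hP).comp z (hdiff z).hasDerivAt
  have haffine : HasDerivAt (potential c1 c2 c6 ∘ h) (-2 * c2) z := by
    rw [show potential c1 c2 c6 ∘ h = fun z => -2 * c2 * z + c0 from funext himp]
    simpa using ((hasDerivAt_id z).const_mul (-2 * c2)).add_const c0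
  have hderiv := hchain.unique haffine
  field_simp [hne z] at hderiv
  rw [hderiv, quadratic]; ring

theorem stmt_13 (c1 c2 c3 c4 c5 c6 c0 : ℝ) (hc6 : c6 ≠ 0)
    (hdisc : c1 ^ 2 + 6 * c2 * c6 < 0)
    (h : ℝ → ℝ) (hdiff : Differentiable ℝ h) (hne : ∀ z : ℝ, h z ≠ 0)
    (hpos : ∀ z : ℝ, 0 < 2 * h z * (3 * c6 * h z + c1) - c2)
    (himp : ∀ z : ℝ,
      Real.log (2 * h z * (3 * c6 * h z + c1) - c2) - 2 * Real.log |h z|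
        + (2 * c1 / Real.sqrt (-c1 ^ 2 - 6 * c2 * c6))
          * Real.arctan ((6 * c6 * h z + c1) / Real.sqrt (-c1 ^ 2 - 6 * c2 * c6))
        = -2 * c2 * z + c0) :
    ∀ z : ℝ, deriv h z = -6 * c6 * (h z) ^ 3 - 2 * c1 * (h z) ^ 2 + c2 * h z :=
  stmt_13_general c1 c2 c6 c0 hdisc h hdiff hne hpos himp
end

section
/- Let c1,...,c6 be real constants with c5 ≠ 0, let w : ℝ → ℝ be three times differentiable with w > 0 everywhere, and let h : ℝ → ℝ satisfy h'(z) = √(w(h(z))) for all z. If h satisfies c5·h'''' + c4·h''' + (c3 − c6)·h'' + c6·(h')² − c1·h' + exp(h) − c2 = 0 on ℝ, then for all z: 2·c5·w(h(z))·w'''(h(z)) + (c5·w'(h(z)) + 2·c4·√(w(h(z))))·w''(h(z)) + 2·(c3 − c6)·w'(h(z)) + 4·c6·w(h(z)) − 4·c1·√(w(h(z))) − 4·c2 + 4·exp(h(z)) = 0. -/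
/-!
Along a solution of the autonomous equation `h' = √(w ∘ h)` the chain rule turns every
derivative of `h` into a function of `h`: `h'' = w'(h)/2`, `h''' = w''(h) √(w h)/2` and
`h'''' = (w'''(h) w(h) + w''(h) w'(h)/2)/2`. Substituting these into the fourth-order equation
and multiplying by `4` gives the third-order equation for `w`.
-/

open Real

lemma deriv_sqrt_mul_sqrt {w : ℝ → ℝ} {s : ℝ} (hw : DifferentiableAt ℝ w s)
    (hs : 0 < w s) :
    deriv (fun s => √(w s)) s * √(w s) = deriv w s / 2 := by
  have hsqrt : √(w s) ≠ 0 := (sqrt_pos.2 hs).ne'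
  rw [(hw.hasDerivAt.sqrt hs.ne').deriv]
  field_simp

section AutonomousSqrt

variable {w h : ℝ → ℝ} (hw : ContDiff ℝ 3 w) (hwpos : ∀ s, 0 < w s)
  (hh : ∀ z, deriv h z = √(w (h z)))

include hwpos hh in
lemma hasDerivAt_of_deriv_eq_sqrt (z : ℝ) : HasDerivAt h (√(w (h z))) z := by
  have hne : deriv h z ≠ 0 := by rw [hh z]; exact (sqrt_pos.2 (hwpos _)).ne'
  simpa only [hh z] using (differentiableAt_of_deriv_ne_zero hne).hasDerivAt

include hwpos hh in
lemma deriv_comp_of_deriv_eq_sqrt {f : ℝ → ℝ} (hf : Differentiable ℝ f) :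
    deriv (fun z => f (h z)) = fun z => deriv f (h z) * √(w (h z)) :=
  funext fun z => ((hf (h z)).hasDerivAt.comp z (hasDerivAt_of_deriv_eq_sqrt hwpos hh z)).deriv

include hw hwpos hh in
lemma iteratedDeriv_two_of_deriv_eq_sqrt :
    iteratedDeriv 2 h = fun z => deriv w (h z) / 2 := by
  have hw1 : Differentiable ℝ w := hw.differentiable (by norm_num)
  rw [iteratedDeriv_succ, iteratedDeriv_one, funext hh,
    deriv_comp_of_deriv_eq_sqrt hwpos hh (hw1.sqrt fun s => (hwpos s).ne')]
  exact funext fun z => deriv_sqrt_mul_sqrt (hw1 _) (hwpos _)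

include hw hwpos hh in
lemma iteratedDeriv_three_of_deriv_eq_sqrt :
    iteratedDeriv 3 h = fun z => iteratedDeriv 2 w (h z) / 2 * √(w (h z)) := by
  have hdw : Differentiable ℝ (fun s => deriv w s / 2) := by
    simpa only [iteratedDeriv_one] using
      (hw.differentiable_iteratedDeriv 1 (by norm_num)).div_const 2
  rw [iteratedDeriv_succ, iteratedDeriv_two_of_deriv_eq_sqrt hw hwpos hh,
    deriv_comp_of_deriv_eq_sqrt hwpos hh hdw]
  ext z
  rw [deriv_div_const, iteratedDeriv_succ, iteratedDeriv_one]

include hw hwpos hh in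
lemma iteratedDeriv_four_of_deriv_eq_sqrt :
    iteratedDeriv 4 h = fun z => (iteratedDeriv 3 w (h z) * w (h z)
      + iteratedDeriv 2 w (h z) * deriv w (h z) / 2) / 2 := by
  have hw1 : Differentiable ℝ w := hw.differentiable (by norm_num)
  have hw2 : Differentiable ℝ (iteratedDeriv 2 w) :=
    hw.differentiable_iteratedDeriv 2 (by norm_num)
  have hderiv : ∀ s, HasDerivAt (fun s => iteratedDeriv 2 w s / 2 * √(w s))
      (iteratedDeriv 3 w s / 2 * √(w s)
        + iteratedDeriv 2 w s / 2 * (deriv w s / (2 * √(w s)))) s := fun s => by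
    rw [show iteratedDeriv 3 w = deriv (iteratedDeriv 2 w) from iteratedDeriv_succ]
    exact ((hw2 s).hasDerivAt.div_const 2).mul ((hw1 s).hasDerivAt.sqrt (hwpos s).ne')
  rw [iteratedDeriv_succ, iteratedDeriv_three_of_deriv_eq_sqrt hw hwpos hh,
    deriv_comp_of_deriv_eq_sqrt hwpos hh fun s => (hderiv s).differentiableAt]
  ext z
  have hsqrt : √(w (h z)) ≠ 0 := (sqrt_pos.2 (hwpos _)).ne'
  rw [(hderiv (h z)).deriv]
  field_simp
  rw [sq_sqrt (hwpos _).le]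

end AutonomousSqrt

theorem stmt_14_general (c1 c2 c3 c4 c5 c6 : ℝ)
    (w : ℝ → ℝ) (hw : ContDiff ℝ 3 w) (hwpos : ∀ s : ℝ, 0 < w s)
    (h : ℝ → ℝ) (hh : ∀ z : ℝ, deriv h z = Real.sqrt (w (h z)))
    (hode : ∀ z : ℝ, c5 * iteratedDeriv 4 h z + c4 * iteratedDeriv 3 h z
      + (c3 - c6) * iteratedDeriv 2 h z + c6 * (deriv h z) ^ 2 - c1 * deriv h z
      + Real.exp (h z) - c2 = 0) :
    ∀ z : ℝ,
      2 * c5 * w (h z) * iteratedDeriv 3 w (h z)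
        + (c5 * deriv w (h z) + 2 * c4 * Real.sqrt (w (h z))) * iteratedDeriv 2 w (h z)
        + 2 * (c3 - c6) * deriv w (h z)
        + 4 * c6 * w (h z)
        - 4 * c1 * Real.sqrt (w (h z))
        - 4 * c2 + 4 * Real.exp (h z) = 0 := by
  intro z
  have hode_z := hode z
  rw [iteratedDeriv_four_of_deriv_eq_sqrt hw hwpos hh,
    iteratedDeriv_three_of_deriv_eq_sqrt hw hwpos hh,
    iteratedDeriv_two_of_deriv_eq_sqrt hw hwpos hh, hh z, sq_sqrt (hwpos _).le] at hode_z
  linear_combination 4 * hode_z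

theorem stmt_14 (c1 c2 c3 c4 c5 c6 : ℝ) (hc5 : c5 ≠ 0)
    (w : ℝ → ℝ) (hw : ContDiff ℝ 3 w) (hwpos : ∀ s : ℝ, 0 < w s)
    (h : ℝ → ℝ) (hh : ∀ z : ℝ, deriv h z = Real.sqrt (w (h z)))
    (hode : ∀ z : ℝ, c5 * iteratedDeriv 4 h z + c4 * iteratedDeriv 3 h z
      + (c3 - c6) * iteratedDeriv 2 h z + c6 * (deriv h z) ^ 2 - c1 * deriv h z
      + Real.exp (h z) - c2 = 0) :
    ∀ z : ℝ,
      2 * c5 * w (h z) * iteratedDeriv 3 w (h z)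
        + (c5 * deriv w (h z) + 2 * c4 * Real.sqrt (w (h z))) * iteratedDeriv 2 w (h z)
        + 2 * (c3 - c6) * deriv w (h z)
        + 4 * c6 * w (h z)
        - 4 * c1 * Real.sqrt (w (h z))
        - 4 * c2 + 4 * Real.exp (h z) = 0 :=
  stmt_14_general c1 c2 c3 c4 c5 c6 w hw hwpos h hh hode
end
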